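/- The map l of the previous statements satisfies the second colinearity condition (id_H⊗l)∘Δ = (δ_L⊗id_P)∘l, where δ_L: P → H⊗P is the induced left coaction δ_L(p) = S⁻¹(p₍₁₎)⊗p₍₀₎. -/

import Mathlib

/-!
The antipode is an anti-coalgebra map, `Δ (S h) = S h₍₂₎ ⊗ S h₍₁₎`: in the convolution algebra of
linear maps `H → H ⊗ H`, `Δ ∘ S` is a right and `(S ⊗ S) ∘ τ ∘ Δ` a left inverse of `Δ`. Hence
`δ_L (1 ⊗ S h, 0) = S⁻¹ (S h₍₁₎) ⊗ (1 ⊗ S h₍₂₎, 0) = h₍₁₎ ⊗ (1 ⊗ S h₍₂₎, 0)`, and by coassociativity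
both sides of the identity equal `h₍₁₎ ⊗ (1 ⊗ S h₍₂₎, 0) ⊗ (1 ⊗ h₍₃₎, 0)` plus the same term on the
`B'` summand.
-/

open TensorProduct

section

variable (k : Type*) [CommRing k] (H : Type*) [Ring H] [HopfAlgebra k H]
variable (B B' : Type*) [Ring B] [Algebra k B] [Ring B'] [Algebra k B']

/-- The coaction id ⊗ Δ on B ⊗ H, viewed as a map B⊗H → (B⊗H)⊗H. -/
noncomputable def deltaBH : B ⊗[k] H →ₗ[k] (B ⊗[k] H) ⊗[k] H :=
  (TensorProduct.assoc k B H H).symm.toLinearMap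
    ∘ₗ TensorProduct.map LinearMap.id Coalgebra.comul

/-- The right H-coaction on P = (B⊗H) ⊕ (B'⊗H), acting as id ⊗ Δ on each summand. -/
noncomputable def deltaP : ((B ⊗[k] H) × (B' ⊗[k] H)) →ₗ[k]
    ((B ⊗[k] H) × (B' ⊗[k] H)) ⊗[k] H :=
  TensorProduct.map (LinearMap.inl k (B ⊗[k] H) (B' ⊗[k] H)) LinearMap.id
      ∘ₗ deltaBH k H B ∘ₗ LinearMap.fst k (B ⊗[k] H) (B' ⊗[k] H)
  + TensorProduct.map (LinearMap.inr k (B ⊗[k] H) (B' ⊗[k] H)) LinearMap.id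
      ∘ₗ deltaBH k H B' ∘ₗ LinearMap.snd k (B ⊗[k] H) (B' ⊗[k] H)

/-- The map l : H → P ⊗ P,
l(h) = (1⊗S(h₍₁₎),0)⊗(1⊗h₍₂₎,0) + (0,1⊗S(h₍₁₎))⊗(0,1⊗h₍₂₎). -/
noncomputable def connMap : H →ₗ[k]
    ((B ⊗[k] H) × (B' ⊗[k] H)) ⊗[k] ((B ⊗[k] H) × (B' ⊗[k] H)) :=
  (TensorProduct.map
      ((LinearMap.inl k (B ⊗[k] H) (B' ⊗[k] H)) ∘ₗ (TensorProduct.mk k B H 1)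
        ∘ₗ HopfAlgebra.antipode (R := k))
      ((LinearMap.inl k (B ⊗[k] H) (B' ⊗[k] H)) ∘ₗ (TensorProduct.mk k B H 1))
    ∘ₗ Coalgebra.comul)
  + (TensorProduct.map
      ((LinearMap.inr k (B ⊗[k] H) (B' ⊗[k] H)) ∘ₗ (TensorProduct.mk k B' H 1)
        ∘ₗ HopfAlgebra.antipode (R := k))
      ((LinearMap.inr k (B ⊗[k] H) (B' ⊗[k] H)) ∘ₗ (TensorProduct.mk k B' H 1))
    ∘ₗ Coalgebra.comul)

/-- The lifted canonical map χ̃ : P ⊗ P → P ⊗ H, p ⊗ p' ↦ p·p'₍₀₎ ⊗ p'₍₁₎. -/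
noncomputable def chiTildeP :
    ((B ⊗[k] H) × (B' ⊗[k] H)) ⊗[k] ((B ⊗[k] H) × (B' ⊗[k] H)) →ₗ[k]
      ((B ⊗[k] H) × (B' ⊗[k] H)) ⊗[k] H :=
  TensorProduct.map (LinearMap.mul' k _) LinearMap.id
    ∘ₗ (TensorProduct.assoc k ((B ⊗[k] H) × (B' ⊗[k] H))
          ((B ⊗[k] H) × (B' ⊗[k] H)) H).symm.toLinearMap
    ∘ₗ TensorProduct.map LinearMap.id (deltaP k H B B')

/-- The induced left coaction δ_L : P → H ⊗ P, p ↦ S⁻¹(p₍₁₎) ⊗ p₍₀₎,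
for a given inverse Sinv of the antipode. -/
noncomputable def deltaLP (Sinv : H →ₗ[k] H) :
    ((B ⊗[k] H) × (B' ⊗[k] H)) →ₗ[k] H ⊗[k] ((B ⊗[k] H) × (B' ⊗[k] H)) :=
  TensorProduct.map Sinv LinearMap.id
    ∘ₗ (TensorProduct.comm k ((B ⊗[k] H) × (B' ⊗[k] H)) H).toLinearMap
    ∘ₗ deltaP k H B B'

section Colinearity

open Coalgebra HopfAlgebra WithConv LinearMap

variable {R A : Type*} [CommSemiring R] [Semiring A] [HopfAlgebra R A]

theorem AlgHom.toConv_comp_antipode_mul {C : Type*} [Semiring C] [Algebra R C] (φ : A →ₐ[R] C) :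
    toConv (φ.toLinearMap ∘ₗ antipode R) * toConv φ.toLinearMap = 1 := by
  have hφ := algHom_comp_convMul_distrib φ (toConv (antipode R)) (toConv LinearMap.id)
  rw [antipode_mul_id] at hφ
  apply WithConv.ofConv_injective
  rw [← φ.toLinearMap.comp_id]
  exact hφ.symm.trans (by ext; simp)

theorem HopfAlgebra.comul_comp_antipode :
    comul ∘ₗ antipode R (A := A) =
      map (antipode R) (antipode R) ∘ₗ (TensorProduct.comm R A A).toLinearMap ∘ₗ comul := by
  set G := map (antipode R) (antipode R) ∘ₗ (TensorProduct.comm R A A).toLinearMap ∘ₗ comul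
  -- `G` factors as `(1 ⊗ S) * (S ⊗ 1)` and `Δ` as `(id ⊗ 1) * (1 ⊗ id)`, so `G * Δ = 1` reduces to
  -- `S * id = 1` inside each tensor factor.
  set i₁ := (Algebra.TensorProduct.includeLeft : A →ₐ[R] A ⊗[R] A).toLinearMap
  set i₂ := (Algebra.TensorProduct.includeRight : A →ₐ[R] A ⊗[R] A).toLinearMap
  have hG : toConv G = toConv (i₂ ∘ₗ antipode R) * toConv (i₁ ∘ₗ antipode R) := by
    have hμ : mul' R (A ⊗[R] A) ∘ₗ map (i₂ ∘ₗ antipode R) (i₁ ∘ₗ antipode R) =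
        map (antipode R) (antipode R) ∘ₗ (TensorProduct.comm R A A).toLinearMap :=
      TensorProduct.ext' fun a b ↦ by simp [i₁, i₂]
    simp only [G, LinearMap.convMul_def, ← comp_assoc, hμ]
  have hδ : toConv (comul (R := R) (A := A)) = toConv i₁ * toConv i₂ := by
    have hμ : mul' R (A ⊗[R] A) ∘ₗ map i₁ i₂ = LinearMap.id :=
      TensorProduct.ext' fun a b ↦ by simp [i₁, i₂]
    rw [LinearMap.convMul_def, ofConv_toConv, ofConv_toConv, ← comp_assoc, hμ, id_comp]
  have hGδ : toConv G * toConv comul = 1 := by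
    rw [hG, hδ, mul_assoc, ← mul_assoc (toConv (i₁ ∘ₗ antipode R)),
      AlgHom.toConv_comp_antipode_mul, one_mul, AlgHom.toConv_comp_antipode_mul]
  exact congrArg ofConv (left_inv_eq_right_inv hGδ comul_right_inv).symm

variable {P Q : Type*} [AddCommMonoid P] [Module R P] [AddCommMonoid Q] [Module R Q]

theorem comp_comp_eq_rTensor_comp {M N : Type*} [AddCommMonoid M] [Module R M] [AddCommMonoid N]
    [Module R N] {ρ : P →ₗ[R] P ⊗[R] A} {σ : M →ₗ[R] M ⊗[R] A} {τ : N →ₗ[R] N ⊗[R] A}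
    {ι : M →ₗ[R] P} {f : N →ₗ[R] M} (hι : ρ ∘ₗ ι = ι.rTensor A ∘ₗ σ)
    (hf : σ ∘ₗ f = f.rTensor A ∘ₗ τ) : ρ ∘ₗ ι ∘ₗ f = (ι ∘ₗ f).rTensor A ∘ₗ τ := by
  rw [← comp_assoc, hι, comp_assoc, hf, ← comp_assoc, ← rTensor_comp]

noncomputable def leftCoactionOfRight (Sinv : A →ₗ[R] A) (ρ : P →ₗ[R] P ⊗[R] A) :
    P →ₗ[R] A ⊗[R] P :=
  map Sinv LinearMap.id ∘ₗ (TensorProduct.comm R P A).toLinearMap ∘ₗ ρ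

def IsLeftColinear (δL : P →ₗ[R] A ⊗[R] P) (l : A →ₗ[R] P ⊗[R] Q) : Prop :=
  l.lTensor A ∘ₗ comul = (TensorProduct.assoc R A P Q).toLinearMap ∘ₗ δL.rTensor Q ∘ₗ l

theorem IsLeftColinear.add {δL : P →ₗ[R] A ⊗[R] P} {l₁ l₂ : A →ₗ[R] P ⊗[R] Q}
    (h₁ : IsLeftColinear δL l₁) (h₂ : IsLeftColinear δL l₂) : IsLeftColinear δL (l₁ + l₂) := by
  unfold IsLeftColinear at *
  rw [lTensor_add, add_comp, h₁, h₂, comp_add, comp_add]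

theorem leftCoactionOfRight_comp_comp_antipode (Sinv : A →ₗ[R] A)
    (hS : ∀ a, Sinv (antipode R a) = a) (ρ : P →ₗ[R] P ⊗[R] A) {f : A →ₗ[R] P}
    (hf : ρ ∘ₗ f = f.rTensor A ∘ₗ comul) :
    leftCoactionOfRight Sinv ρ ∘ₗ f ∘ₗ antipode R = map LinearMap.id (f ∘ₗ antipode R) ∘ₗ comul := by
  have hflip : map Sinv LinearMap.id ∘ₗ (TensorProduct.comm R P A).toLinearMap ∘ₗ
      f.rTensor A ∘ₗ map (antipode R) (antipode R) ∘ₗ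
        (TensorProduct.comm R A A).toLinearMap = map LinearMap.id (f ∘ₗ antipode R) :=
    TensorProduct.ext' fun a b ↦ by simp [hS]
  rw [leftCoactionOfRight, comp_assoc, comp_assoc, ← comp_assoc (antipode R) f ρ, hf, comp_assoc,
    comul_comp_antipode, ← hflip]
  simp only [comp_assoc]

theorem isLeftColinear_map_comp_antipode_comul (Sinv : A →ₗ[R] A)
    (hS : ∀ a, Sinv (antipode R a) = a) (ρ : P →ₗ[R] P ⊗[R] A) {f : A →ₗ[R] P}
    (hf : ρ ∘ₗ f = f.rTensor A ∘ₗ comul) (g : A →ₗ[R] Q) :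
    IsLeftColinear (leftCoactionOfRight Sinv ρ) (map (f ∘ₗ antipode R) g ∘ₗ comul) := by
  unfold IsLeftColinear
  calc (map (f ∘ₗ antipode R) g ∘ₗ comul).lTensor A ∘ₗ comul
      = map LinearMap.id (map (f ∘ₗ antipode R) g) ∘ₗ comul.lTensor A ∘ₗ comul := by
        rw [lTensor_comp, comp_assoc]; rfl
    _ = map LinearMap.id (map (f ∘ₗ antipode R) g) ∘ₗ (TensorProduct.assoc R A A A).toLinearMap ∘ₗ
          comul.rTensor A ∘ₗ comul := by
        rw [coassoc]
    _ = (TensorProduct.assoc R A P Q).toLinearMap ∘ₗ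
          map (map LinearMap.id (f ∘ₗ antipode R) ∘ₗ comul) g ∘ₗ comul := by
        rw [← comp_assoc, map_map_comp_assoc_eq, comp_assoc, ← comp_assoc _ _ (map _ g),
          map_comp_rTensor]
    _ = (TensorProduct.assoc R A P Q).toLinearMap ∘ₗ (leftCoactionOfRight Sinv ρ).rTensor Q ∘ₗ
          map (f ∘ₗ antipode R) g ∘ₗ comul := by
        rw [← leftCoactionOfRight_comp_comp_antipode Sinv hS ρ hf, ← rTensor_comp_map]
        rfl

end Colinearity

open Coalgebra LinearMap in
theorem deltaBH_comp_mk :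
    deltaBH k H B ∘ₗ TensorProduct.mk k B H 1 = (TensorProduct.mk k B H 1).rTensor H ∘ₗ comul := by
  have hmk : comul.lTensor B ∘ₗ TensorProduct.mk k B H 1 =
      TensorProduct.mk k B (H ⊗[k] H) 1 ∘ₗ comul :=
    LinearMap.ext fun h ↦ lTensor_tmul _ _ _ _
  have hassoc : (TensorProduct.assoc k B H H).symm.toLinearMap ∘ₗ
      TensorProduct.mk k B (H ⊗[k] H) 1 = (TensorProduct.mk k B H 1).rTensor H :=
    TensorProduct.ext' fun x y ↦ by simp
  rw [deltaBH, comp_assoc, ← lTensor, hmk, ← comp_assoc, hassoc]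

open LinearMap in
theorem deltaP_comp_inl : deltaP k H B B' ∘ₗ inl k (B ⊗[k] H) (B' ⊗[k] H) =
    (inl k (B ⊗[k] H) (B' ⊗[k] H)).rTensor H ∘ₗ deltaBH k H B :=
  LinearMap.ext fun x ↦ by simp [deltaP, rTensor]

open LinearMap in
theorem deltaP_comp_inr : deltaP k H B B' ∘ₗ inr k (B ⊗[k] H) (B' ⊗[k] H) =
    (inr k (B ⊗[k] H) (B' ⊗[k] H)).rTensor H ∘ₗ deltaBH k H B' :=
  LinearMap.ext fun x ↦ by simp [deltaP, rTensor]

theorem stmt13 (Sinv : H →ₗ[k] H)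
    (hS1 : ∀ h, Sinv (HopfAlgebra.antipode (R := k) h) = h) :
    TensorProduct.map LinearMap.id (connMap k H B B') ∘ₗ Coalgebra.comul
      = (TensorProduct.assoc k H ((B ⊗[k] H) × (B' ⊗[k] H))
            ((B ⊗[k] H) × (B' ⊗[k] H))).toLinearMap
          ∘ₗ TensorProduct.map (deltaLP k H B B' Sinv) LinearMap.id
          ∘ₗ connMap k H B B' :=
  (isLeftColinear_map_comp_antipode_comul Sinv hS1 _
      (comp_comp_eq_rTensor_comp (deltaP_comp_inl k H B B') (deltaBH_comp_mk k H B)) _).add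
    (isLeftColinear_map_comp_antipode_comul Sinv hS1 _
      (comp_comp_eq_rTensor_comp (deltaP_comp_inr k H B B') (deltaBH_comp_mk k H B')) _)

end
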